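/- For every m ≥ 3, the number of admissible pinnacle sets whose maximum element equals m is binomial(m-2, ⌊m/2⌋). -/

import Mathlib

/-- `i` is a peak of the permutation `w` of `{1,…,n}` (represented on `Fin n`):
`0 < i < n-1` (0-indexed) and `w(i-1) < w(i) > w(i+1)`. -/
def IsPeak {n : ℕ} (w : Equiv.Perm (Fin n)) (i : Fin n) : Prop :=
  0 < i.val ∧ ∃ h : i.val + 1 < n,
    w ⟨i.val - 1, Nat.lt_of_le_of_lt (Nat.sub_le _ _) i.isLt⟩ < w i ∧
    w ⟨i.val + 1, h⟩ < w i

/-- The pinnacle set of `w`, as a set of values in `{1,…,n}`. -/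
def Pin {n : ℕ} (w : Equiv.Perm (Fin n)) : Set ℕ :=
  {v | ∃ i : Fin n, IsPeak w i ∧ v = (w i).val + 1}

/-- `p_S(n)`: the number of permutations in `S_n` with pinnacle set `S`. -/
noncomputable def pcount (n : ℕ) (S : Set ℕ) : ℕ :=
  Nat.card {w : Equiv.Perm (Fin n) // Pin w = S}

/-- `S` is an admissible pinnacle set. -/
def Admissible (S : Finset ℕ) : Prop :=
  ∃ (n : ℕ) (w : Equiv.Perm (Fin n)), Pin w = ↑S

/-!
If `s` is a pinnacle value, the pinnacles with value at most `s` are pairwise non-adjacent, so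
together with their right neighbours and the left neighbour of the leftmost one they are `2k + 1`
distinct entries at most `s`: the `k`-th pinnacle value exceeds `2k`. Conversely, if
`s₁ < ⋯ < s_d` satisfy `sᵢ > 2i`, then `c₁ s₁ c₂ s₂ ⋯ c_d s_d` followed by the remaining values
`c_{d+1}, …` in decreasing order has pinnacle set `{s₁, …, s_d}`, the `cⱼ` being the non-pinnacle
values in increasing order.

An admissible set with maximum `m` is thus `insert m T` with `T ⊆ [0, m)` admissible and
`2 (#T + 1) < m`. Splitting on whether `n ∈ T` gives a Pascal recursion for the number of
admissible `T ⊆ [0, n + 1)` of bounded size, solved by a binomial coefficient.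
-/

open Finset

/-- `i` is a peak of the sequence `F 0, …, F (n - 1)`. -/
def IsPeakAt (F : ℕ → ℕ) (n i : ℕ) : Prop :=
  0 < i ∧ i + 1 < n ∧ F (i - 1) < F i ∧ F (i + 1) < F i

lemma isPeak_iff_isPeakAt {n : ℕ} {w : Equiv.Perm (Fin n)} {F : ℕ → ℕ}
    (hF : ∀ i : Fin n, (w i : ℕ) = F i) (i : Fin n) : IsPeak w i ↔ IsPeakAt F n i := by
  simp only [IsPeak, IsPeakAt, Fin.lt_def, hF, exists_prop]

lemma pin_eq_of_val {n : ℕ} {w : Equiv.Perm (Fin n)} {F : ℕ → ℕ}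
    (hF : ∀ i : Fin n, (w i : ℕ) = F i) : Pin w = {v | ∃ i, IsPeakAt F n i ∧ v = F i + 1} := by
  ext v
  simp only [Pin, Set.mem_ofPred_eq, isPeak_iff_isPeakAt hF, hF]
  constructor
  · rintro ⟨i, hi, rfl⟩
    exact ⟨i, hi, rfl⟩
  · rintro ⟨i, hi, rfl⟩
    exact ⟨⟨i, by have := hi.2.1; omega⟩, hi, rfl⟩

lemma exists_perm_val_eq {n : ℕ} {F : ℕ → ℕ} (hmaps : ∀ i < n, F i < n)
    (hinj : Set.InjOn F (Set.Iio n)) : ∃ w : Equiv.Perm (Fin n), ∀ i, (w i : ℕ) = F i := by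
  let G : Fin n → Fin n := fun i => ⟨F i, hmaps i i.isLt⟩
  have hG : Function.Injective G := fun i j h =>
    Fin.ext (hinj i.isLt j.isLt (congrArg Fin.val h))
  exact ⟨Equiv.ofBijective G (Finite.injective_iff_bijective.mp hG), fun _ => rfl⟩

lemma IsPeakAt.not_isPeakAt_succ {F : ℕ → ℕ} {n i : ℕ} (hi : IsPeakAt F n i) :
    ¬ IsPeakAt F n (i + 1) :=
  fun h => (hi.2.2.2.trans h.2.2.1).false

lemma two_mul_card_peaks_lt {F : ℕ → ℕ} {n s : ℕ} (hF : Set.InjOn F (Set.Iio n))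
    {P : Finset ℕ} (hne : P.Nonempty) (hP : ∀ p ∈ P, IsPeakAt F n p ∧ F p < s) :
    2 * #P < s := by
  set q := P.min' hne
  have hq : IsPeakAt F n q := (hP q (P.min'_mem hne)).1
  set X := insert (q - 1) (P ∪ P.image (· + 1))
  have hdisj : Disjoint P (P.image (· + 1)) := by
    simp only [Finset.disjoint_left, Finset.mem_image, not_exists, not_and]
    intro x hx p hp hpx
    exact (hP p hp).1.not_isPeakAt_succ (hpx ▸ (hP x hx).1)
  have hnotin : q - 1 ∉ P ∪ P.image (· + 1) := by
    simp only [Finset.mem_union, Finset.mem_image, not_or, not_exists, not_and]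
    have hq0 := hq.1
    refine ⟨fun h => ?_, fun p hp hpq => ?_⟩
    · have := P.min'_le _ h; omega
    · have := P.min'_le _ hp; omega
  have hcard : #X = 2 * #P + 1 := by
    rw [Finset.card_insert_of_notMem hnotin, Finset.card_union_of_disjoint hdisj,
      Finset.card_image_of_injective _ (add_left_injective 1)]
    ring
  have hlt : ∀ x ∈ X, F x < s := by
    simp only [X, Finset.mem_insert, Finset.mem_union, Finset.mem_image]
    rintro x (rfl | hx | ⟨p, hp, rfl⟩)
    · exact hq.2.2.1.trans (hP q (P.min'_mem hne)).2
    · exact (hP x hx).2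
    · exact (hP p hp).1.2.2.2.trans (hP p hp).2
  have hXn : ∀ x ∈ X, x < n := by
    simp only [X, Finset.mem_insert, Finset.mem_union, Finset.mem_image]
    rintro x (rfl | hx | ⟨p, hp, rfl⟩)
    · have := hq.2.1; omega
    · have := (hP x hx).1.2.1; omega
    · exact (hP p hp).1.2.1
  have : #X ≤ #(range s) :=
    Finset.card_le_card_of_injOn F (fun x hx => Finset.mem_range.mpr (hlt x hx))
      (hF.mono fun x hx => hXn x hx)
  rw [hcard, Finset.card_range] at this
  omega

/-- Writing `S = {s₀ < s₁ < ⋯}`, the set `{t ∈ S | t ≤ sᵢ}` has `i + 1` elements, so this is the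
condition `sᵢ > 2 (i + 1)`. -/
def PinnacleBound (S : Finset ℕ) : Prop :=
  ∀ s ∈ S, 2 * #{t ∈ S | t ≤ s} < s

instance : DecidablePred PinnacleBound := fun S => by
  unfold PinnacleBound
  infer_instance

lemma pinnacleBound_of_pin_eq {n : ℕ} (w : Equiv.Perm (Fin n)) {S : Finset ℕ}
    (hw : Pin w = S) : PinnacleBound S := by
  classical
  intro s hs
  let F : ℕ → ℕ := fun i => if h : i < n then w ⟨i, h⟩ else 0
  have hF : ∀ i : Fin n, (w i : ℕ) = F i := fun i => by simp [F, i.isLt]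
  have hFinj : Set.InjOn F (Set.Iio n) := by
    intro i hi j hj h
    simp only [F, dif_pos (show i < n from hi), dif_pos (show j < n from hj)] at h
    exact congrArg Fin.val (w.injective (Fin.ext h))
  have hpin : ∀ v, v ∈ S ↔ ∃ i, IsPeakAt F n i ∧ v = F i + 1 := fun v => by
    rw [← Finset.mem_coe, ← hw, pin_eq_of_val hF]
    rfl
  set P := {i ∈ range n | IsPeakAt F n i ∧ F i < s}
  have hmemP : ∀ i, IsPeakAt F n i → F i < s → i ∈ P := fun i hi his => by
    simp only [P, Finset.mem_filter, Finset.mem_range]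
    exact ⟨by have := hi.2.1; omega, hi, his⟩
  have hle : #{t ∈ S | t ≤ s} ≤ #P := by
    apply Finset.card_le_card_of_surjOn (F · + 1)
    intro t ht
    rw [Finset.coe_filter, Set.mem_ofPred_eq] at ht
    obtain ⟨i, hi, rfl⟩ := (hpin t).mp ht.1
    exact ⟨i, hmemP i hi (by omega), rfl⟩
  obtain ⟨i, hi, rfl⟩ := (hpin s).mp hs
  have := two_mul_card_peaks_lt hFinj ⟨i, hmemP i hi (by omega)⟩
    (fun p hp => (Finset.mem_filter.mp hp).2)
  omega

/-- The sequence `b₀ a₀ b₁ a₁ ⋯ b_{d-1} a_{d-1}` followed by `b_{n-d-1}, …, b_{d+1}, b_d`. -/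
def zigzag (a b : ℕ → ℕ) (n d k : ℕ) : ℕ :=
  if k < 2 * d then if k % 2 = 1 then a (k / 2) else b (k / 2) else b (n + d - 1 - k)

section Zigzag

variable {a b : ℕ → ℕ} {n d : ℕ}

lemma zigzag_of_odd {k : ℕ} (hk : k % 2 = 1) (hkd : k < 2 * d) :
    zigzag a b n d k = a (k / 2) := by
  simp [zigzag, hk, hkd]

lemma zigzag_of_even {k : ℕ} (hk : k % 2 = 0) (hkd : k < 2 * d) :
    zigzag a b n d k = b (k / 2) := by
  simp [zigzag, hk, hkd]

lemma zigzag_of_two_mul_le {k : ℕ} (hkd : 2 * d ≤ k) : zigzag a b n d k = b (n + d - 1 - k) := by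
  simp [zigzag, not_lt.mpr hkd]

lemma isPeakAt_zigzag_iff (hb : StrictMono b) (hab : ∀ j < d, ∀ k ≤ j + 1, b k < a j)
    (htop : ∀ k < n - d, b k < a (d - 1)) (hd : 2 * d < n) (i : ℕ) :
    IsPeakAt (zigzag a b n d) n i ↔ i % 2 = 1 ∧ i < 2 * d := by
  constructor
  · rintro ⟨hi0, hin, hl, hr⟩
    by_contra hne
    rcases lt_trichotomy i (2 * d) with hi | rfl | hi
    · rw [zigzag_of_even (by omega) hi, zigzag_of_odd (by omega) (by omega),
        show (i + 1) / 2 = i / 2 by omega] at hr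
      exact (hab (i / 2) (by omega) (i / 2) (by omega)).not_gt hr
    · rw [zigzag_of_two_mul_le le_rfl, zigzag_of_odd (by omega) (by omega),
        show (2 * d - 1) / 2 = d - 1 by omega] at hl
      exact (htop _ (by omega)).not_gt hl
    · rw [zigzag_of_two_mul_le hi.le, zigzag_of_two_mul_le (by omega)] at hl
      exact (hb (show n + d - 1 - i < n + d - 1 - (i - 1) by omega)).not_gt hl
  · rintro ⟨hodd, hi⟩
    refine ⟨by omega, by omega, ?_, ?_⟩
    · rw [zigzag_of_even (by omega) (by omega), zigzag_of_odd hodd hi,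
        show (i - 1) / 2 = i / 2 by omega]
      exact hab _ (by omega) _ (by omega)
    · rw [zigzag_of_odd hodd hi]
      rcases lt_or_eq_of_le (show i + 1 ≤ 2 * d by omega) with hi' | hi'
      · rw [zigzag_of_even (by omega) hi']
        exact hab _ (by omega) _ (by omega)
      · rw [zigzag_of_two_mul_le hi'.ge, show i / 2 = d - 1 by omega]
        exact htop _ (by omega)

lemma zigzag_injOn (ha : Set.InjOn a (Set.Iio d)) (hb : Function.Injective b)
    (hab : ∀ j < d, ∀ k, a j ≠ b k) : Set.InjOn (zigzag a b n d) (Set.Iio n) := by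
  intro i hi j hj h
  simp only [Set.mem_Iio] at hi hj
  unfold zigzag at h
  split_ifs at h
  all_goals first
    | exact absurd h (hab _ (by omega) _)
    | exact absurd h.symm (hab _ (by omega) _)
    | (have := ha (show i / 2 < d by omega) (show j / 2 < d by omega) h; omega)
    | (have := hb h; omega)

lemma zigzag_lt (ha : ∀ j < d, a j < n) (hb : ∀ k < n - d, b k < n) (hd : 2 * d ≤ n) {k : ℕ}
    (hk : k < n) : zigzag a b n d k < n := by
  unfold zigzag
  split_ifs
  · exact ha _ (by omega)
  · exact hb _ (by omega)
  · exact hb _ (by omega)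

lemma exists_pin_eq_zigzag (ha : Set.InjOn a (Set.Iio d))
    (han : ∀ j < d, a j < n) (hb : StrictMono b) (hab_ne : ∀ j < d, ∀ k, a j ≠ b k)
    (hab : ∀ j < d, ∀ k ≤ j + 1, b k < a j) (htop : ∀ k < n - d, b k < a (d - 1))
    (hd0 : 0 < d) (hd : 2 * d < n) :
    ∃ w : Equiv.Perm (Fin n), Pin w = {v | ∃ j < d, v = a j + 1} := by
  have hbn : ∀ k < n - d, b k < n := fun k hk => (htop k hk).trans (han _ (by omega))
  obtain ⟨w, hw⟩ := exists_perm_val_eq (fun k hk => zigzag_lt han hbn hd.le hk)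
    (zigzag_injOn ha hb.injective hab_ne)
  refine ⟨w, ?_⟩
  ext v
  simp only [pin_eq_of_val hw, Set.mem_ofPred_eq, isPeakAt_zigzag_iff hb hab htop hd]
  constructor
  · rintro ⟨i, ⟨hodd, hi⟩, rfl⟩
    exact ⟨i / 2, by omega, by rw [zigzag_of_odd hodd hi]⟩
  · rintro ⟨j, hj, rfl⟩
    refine ⟨2 * j + 1, ⟨by omega, by omega⟩, ?_⟩
    rw [zigzag_of_odd (by omega) (by omega), show (2 * j + 1) / 2 = j by omega]

end Zigzag

lemma Nat.count_add_count_not (p : ℕ → Prop) [DecidablePred p] (n : ℕ) :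
    Nat.count p n + Nat.count (fun k => ¬ p k) n = n := by
  induction n with
  | zero => simp
  | succ n ih =>
    simp only [Nat.count_succ]
    split_ifs <;> omega

lemma card_filter_le_eq_count (S : Finset ℕ) (s : ℕ) :
    #{t ∈ S | t ≤ s} = Nat.count (· ∈ S) (s + 1) := by
  rw [Nat.count_eq_card_filter_range]
  congr 1
  ext t
  simp only [Finset.mem_filter, Finset.mem_range, Nat.lt_succ_iff, and_comm]

lemma PinnacleBound.two_mul_card_lt_of_forall_le {S : Finset ℕ} (hS : PinnacleBound S) {n : ℕ}
    (hn : n ∈ S) (hle : ∀ t ∈ S, t ≤ n) : 2 * #S < n := by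
  simpa only [Finset.filter_true_of_mem hle] using hS n hn

section Enumeration

variable {S : Finset ℕ} {j : ℕ}

lemma lt_card_toFinset_of_lt_card (hj : j < #S) :
    ∀ hf : (Set.ofPred (· ∈ S)).Finite, j < #hf.toFinset := fun hf => by
  simpa using hj

lemma nth_mem_of_lt_card (hj : j < #S) : Nat.nth (· ∈ S) j ∈ S :=
  Nat.nth_mem j (lt_card_toFinset_of_lt_card hj)

lemma count_nth_of_lt_card (hj : j < #S) : Nat.count (· ∈ S) (Nat.nth (· ∈ S) j) = j :=
  Nat.count_nth (lt_card_toFinset_of_lt_card hj)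

lemma nth_injOn_Iio_card : Set.InjOn (Nat.nth (· ∈ S)) (Set.Iio #S) := fun i hi j hj h => by
  rw [← count_nth_of_lt_card hi, ← count_nth_of_lt_card hj, h]

lemma PinnacleBound.lt_nth (hS : PinnacleBound S) (hj : j < #S) :
    2 * (j + 1) < Nat.nth (· ∈ S) j := by
  have := hS _ (nth_mem_of_lt_card hj)
  rwa [card_filter_le_eq_count, Nat.count_succ, count_nth_of_lt_card hj,
    if_pos (nth_mem_of_lt_card hj)] at this

lemma setOf_exists_lt_card_eq_nth (S : Finset ℕ) :
    {v | ∃ j < #S, v = Nat.nth (· ∈ S) j} = ↑S := by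
  ext v
  simp only [Set.mem_ofPred_eq, Finset.mem_coe]
  constructor
  · rintro ⟨j, hj, rfl⟩
    exact nth_mem_of_lt_card hj
  · intro hv
    refine ⟨Nat.count (· ∈ S) v, ?_, (Nat.nth_count hv).symm⟩
    simpa using Nat.count_lt_card (p := (· ∈ S)) S.finite_toSet hv

lemma nth_notMem_strictMono : StrictMono (Nat.nth (· ∉ S)) :=
  Nat.nth_strictMono S.finite_toSet.infinite_compl

lemma nth_notMem_notMem (k : ℕ) : Nat.nth (· ∉ S) k ∉ S :=
  Nat.nth_mem_of_infinite S.finite_toSet.infinite_compl k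

lemma nth_notMem_lt_of_lt_sub_count {k x : ℕ} (hk : k < x - Nat.count (· ∈ S) x) :
    Nat.nth (· ∉ S) k < x := by
  apply Nat.nth_lt_of_lt_count
  have := Nat.count_add_count_not (· ∈ S) x
  omega

end Enumeration

/-- `S` is realized by `zigzag a b`, where `a j + 1` is the `j`-th element of `S` and `b k + 1`
the `(k + 1)`-th element of its complement (skipping `0`). -/
lemma exists_pin_eq_of_pinnacleBound {S : Finset ℕ} (hS : PinnacleBound S) :
    ∃ (n : ℕ) (w : Equiv.Perm (Fin n)), Pin w = ↑S := by
  rcases S.eq_empty_or_nonempty with rfl | hne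
  · exact ⟨0, 1, by ext v; simp [Pin]⟩
  obtain ⟨n, hnS, hle⟩ : ∃ n ∈ S, ∀ t ∈ S, t ≤ n := ⟨S.max' hne, S.max'_mem hne, S.le_max'⟩
  have hcount_max : Nat.count (· ∈ S) n + 1 = #S := by
    have := card_filter_le_eq_count S n
    rwa [Finset.filter_true_of_mem hle, Nat.count_succ, if_pos hnS, eq_comm] at this
  have hnth_max : Nat.nth (· ∈ S) (#S - 1) = n := by
    rw [← hcount_max, Nat.add_sub_cancel, Nat.nth_count hnS]
  obtain ⟨a, ha⟩ : ∃ a : ℕ → ℕ, ∀ j < #S, a j + 1 = Nat.nth (· ∈ S) j :=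
    ⟨fun j => Nat.nth (· ∈ S) j - 1, fun j hj => by
      have := hS.lt_nth hj
      beta_reduce
      omega⟩
  obtain ⟨b, hb⟩ : ∃ b : ℕ → ℕ, ∀ k, b k + 1 = Nat.nth (· ∉ S) (k + 1) :=
    ⟨fun k => Nat.nth (· ∉ S) (k + 1) - 1, fun k => by
      have := nth_notMem_strictMono (S := S) (show 0 < k + 1 by omega)
      beta_reduce
      omega⟩
  have hb_lt : ∀ k x, k + 1 < x - Nat.count (· ∈ S) x → b k + 1 < x := fun k x h => by
    rw [hb]
    exact nth_notMem_lt_of_lt_sub_count h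
  obtain ⟨w, hw⟩ := exists_pin_eq_zigzag (a := a) (b := b) (n := n) (d := #S)
    (fun i hi j hj h => nth_injOn_Iio_card hi hj (by rw [← ha i hi, ← ha j hj, h]))
    (fun j hj => by have := hle _ (nth_mem_of_lt_card hj); have := ha j hj; omega)
    (fun k l hkl => by
      have := nth_notMem_strictMono (S := S) (show k + 1 < l + 1 by omega)
      have := hb k; have := hb l; omega)
    (fun j hj k h => nth_notMem_notMem (k + 1) (by
      rw [← hb k, ← h, ha j hj]
      exact nth_mem_of_lt_card hj))
    (fun j hj k hk => by
      have := hb_lt k (Nat.nth (· ∈ S) j) (by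
        rw [count_nth_of_lt_card hj]; have := hS.lt_nth hj; omega)
      have := ha j hj; omega)
    (fun k hk => by
      have := hb_lt k n (by omega)
      have := ha (#S - 1) (by omega); rw [hnth_max] at this; omega)
    (Finset.card_pos.mpr hne) (hS.two_mul_card_lt_of_forall_le hnS hle)
  refine ⟨n, w, hw.trans (Eq.trans ?_ (setOf_exists_lt_card_eq_nth S))⟩
  exact Set.ext fun v => exists_congr fun j => and_congr_right fun hj => by rw [ha j hj]

theorem admissible_iff_pinnacleBound {S : Finset ℕ} : Admissible S ↔ PinnacleBound S :=
  ⟨fun ⟨_, w, hw⟩ => pinnacleBound_of_pin_eq w hw, exists_pin_eq_of_pinnacleBound⟩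

lemma pinnacleBound_insert {T : Finset ℕ} {a : ℕ} (hT : ∀ t ∈ T, t < a) :
    PinnacleBound (insert a T) ↔ PinnacleBound T ∧ 2 * (#T + 1) < a := by
  have ha : a ∉ T := fun h => (hT a h).false
  have hfilter_a : {t ∈ insert a T | t ≤ a} = insert a T :=
    Finset.filter_true_of_mem fun t ht => by
      rcases Finset.mem_insert.mp ht with rfl | ht
      exacts [le_rfl, (hT t ht).le]
  have hfilter : ∀ s ∈ T, {t ∈ insert a T | t ≤ s} = {t ∈ T | t ≤ s} := fun s hs => by
    rw [Finset.filter_insert, if_neg (hT s hs).not_ge]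
  simp only [PinnacleBound, Finset.forall_mem_insert, hfilter_a, Finset.card_insert_of_notMem ha]
  rw [and_comm]
  exact and_congr_left' (forall₂_congr fun s hs => by rw [hfilter s hs])

def pinnacleSets (n K : ℕ) : Finset (Finset ℕ) :=
  {T ∈ (range n).powerset | PinnacleBound T ∧ #T < K}

lemma mem_pinnacleSets {n K : ℕ} {T : Finset ℕ} :
    T ∈ pinnacleSets n K ↔ T ⊆ range n ∧ PinnacleBound T ∧ #T < K := by
  rw [pinnacleSets, Finset.mem_filter, Finset.mem_powerset]

lemma pinnacleSets_zero (n : ℕ) : pinnacleSets n 0 = ∅ := by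
  simp [pinnacleSets]

lemma pinnacleSets_one (n : ℕ) : pinnacleSets n 1 = {∅} := by
  ext T
  simp only [mem_pinnacleSets, Nat.lt_one_iff, Finset.card_eq_zero, Finset.mem_singleton]
  constructor
  · exact fun h => h.2.2
  · rintro rfl
    exact ⟨Finset.empty_subset _, fun _ h => absurd h (Finset.notMem_empty _), rfl⟩

lemma pinnacleSets_succ_succ (n K : ℕ) :
    pinnacleSets (n + 1) (K + 1) =
      pinnacleSets n (K + 1) ∪ (pinnacleSets n (min K ((n - 1) / 2))).image (insert n) := by
  rw [pinnacleSets, Finset.range_add_one, Finset.powerset_insert, Finset.filter_union,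
    Finset.filter_image]
  congr 1
  refine congrArg _ (Finset.filter_congr fun T hT => ?_)
  have hT : ∀ t ∈ T, t < n := fun t ht => Finset.mem_range.mp (Finset.mem_powerset.mp hT ht)
  rw [pinnacleBound_insert hT,
    Finset.card_insert_of_notMem fun h => (hT n h).false, lt_min_iff, and_assoc]
  exact and_congr_right fun _ => by omega

lemma notMem_of_mem_pinnacleSets {n K : ℕ} {T : Finset ℕ} (hT : T ∈ pinnacleSets n K) :
    n ∉ T := fun h =>
  (Finset.mem_range.mp ((mem_pinnacleSets.mp hT).1 h)).false

lemma insert_injOn_pinnacleSets (n K : ℕ) :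
    Set.InjOn (insert n) (pinnacleSets n K : Set (Finset ℕ)) :=
  fun T hT U hU h => by
    rw [← Finset.erase_insert (notMem_of_mem_pinnacleSets hT),
      ← Finset.erase_insert (notMem_of_mem_pinnacleSets hU)]
    exact congrArg (Finset.erase · n) h

lemma card_pinnacleSets_succ_succ (n K : ℕ) :
    #(pinnacleSets (n + 1) (K + 1)) =
      #(pinnacleSets n (K + 1)) + #(pinnacleSets n (min K ((n - 1) / 2))) := by
  rw [pinnacleSets_succ_succ, Finset.card_union_of_disjoint,
    Finset.card_image_of_injOn (insert_injOn_pinnacleSets n _)]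
  simp only [Finset.disjoint_right, Finset.mem_image]
  rintro _ ⟨T, -, rfl⟩ h
  exact notMem_of_mem_pinnacleSets h (Finset.mem_insert_self n T)

/-- No set of `pinnacleSets n _` has `K + 1` elements: its maximum would exceed
`2 (K + 1) ≥ n`. -/
lemma pinnacleSets_add_two {n K : ℕ} (h : n ≤ 2 * K + 2) :
    pinnacleSets n (K + 2) = pinnacleSets n (K + 1) := by
  ext T
  simp only [mem_pinnacleSets, and_congr_right_iff]
  intro hT hS
  refine ⟨fun hK => lt_of_le_of_ne (Nat.lt_succ_iff.mp hK) fun hcard => ?_, fun hK => by omega⟩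
  have hne : T.Nonempty := Finset.card_pos.mp (by omega)
  have := hS.two_mul_card_lt_of_forall_le (T.max'_mem hne) T.le_max'
  have := Finset.mem_range.mp (hT (T.max'_mem hne))
  omega

/-- At the boundary `n = 2 K + 2` the Pascal recursion closes only through the symmetry of
binomial coefficients. -/
theorem card_pinnacleSets {n K : ℕ} (h : 2 * K < n) :
    #(pinnacleSets n (K + 1)) = (n - 2).choose K := by
  induction n generalizing K with
  | zero => omega
  | succ n ih =>
    rcases K with _ | K
    · rw [pinnacleSets_one, Finset.card_singleton, Nat.choose_zero_right]
    rw [card_pinnacleSets_succ_succ]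
    rcases (show 2 * K + 2 < n ∨ n = 2 * K + 2 by omega) with hlt | rfl
    · rw [min_eq_left (by omega), ih hlt, ih (by omega), show n + 1 - 2 = n - 2 + 1 by omega,
        Nat.choose_succ_succ', add_comm]
    · rw [show min (K + 1) ((2 * K + 2 - 1) / 2) = K by omega, pinnacleSets_add_two le_rfl,
        ih (by omega), show 2 * K + 2 + 1 - 2 = 2 * K + 1 by omega, Nat.choose_succ_succ,
        show 2 * K + 2 - 2 = 2 * K by omega]
      congr 1
      rcases K with _ | K
      · simp [pinnacleSets_zero]
      · rw [ih (K := K) (by omega), show 2 * (K + 1) + 2 - 2 = 2 * (K + 1) by omega]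
        exact Nat.choose_symm_of_eq_add (by omega)

lemma admissible_and_max'_eq_iff {m : ℕ} {S : Finset ℕ} :
    (Admissible S ∧ ∃ h : S.Nonempty, S.max' h = m) ↔
      S ∈ (pinnacleSets m ((m - 1) / 2)).image (insert m) := by
  rw [admissible_iff_pinnacleBound, Finset.mem_image]
  constructor
  · rintro ⟨hS, hne, rfl⟩
    have hT : ∀ t ∈ S.erase (S.max' hne), t < S.max' hne := fun t ht =>
      lt_of_le_of_ne (S.le_max' t (Finset.mem_of_mem_erase ht)) (Finset.ne_of_mem_erase ht)
    refine ⟨S.erase (S.max' hne), ?_, Finset.insert_erase (S.max'_mem hne)⟩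
    rw [← Finset.insert_erase (S.max'_mem hne), pinnacleBound_insert hT] at hS
    exact mem_pinnacleSets.mpr ⟨fun t ht => Finset.mem_range.mpr (hT t ht), hS.1, by omega⟩
  · rintro ⟨T, hT, rfl⟩
    obtain ⟨hsub, hTb, hcard⟩ := mem_pinnacleSets.mp hT
    have hlt : ∀ t ∈ T, t < m := fun t ht => Finset.mem_range.mp (hsub ht)
    refine ⟨(pinnacleBound_insert hlt).mpr ⟨hTb, by omega⟩, Finset.insert_nonempty m T, ?_⟩
    refine le_antisymm (Finset.max'_le _ _ _ fun t ht => ?_)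
      (Finset.le_max' _ m (Finset.mem_insert_self m T))
    rcases Finset.mem_insert.mp ht with rfl | ht
    exacts [le_rfl, (hlt t ht).le]

theorem count_admissible_with_max (m : ℕ) (hm : 3 ≤ m) :
    Nat.card {S : Finset ℕ // Admissible S ∧ ∃ h : S.Nonempty, S.max' h = m} =
      Nat.choose (m - 2) (m / 2) := by
  calc Nat.card {S : Finset ℕ // Admissible S ∧ ∃ h : S.Nonempty, S.max' h = m}
      = #((pinnacleSets m ((m - 1) / 2)).image (insert m)) := by
        simp only [admissible_and_max'_eq_iff]
        exact Nat.card_eq_finsetCard _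
    _ = #(pinnacleSets m ((m - 3) / 2 + 1)) := by
        rw [Finset.card_image_of_injOn (insert_injOn_pinnacleSets m _),
          show (m - 1) / 2 = (m - 3) / 2 + 1 by omega]
    _ = (m - 2).choose ((m - 3) / 2) := card_pinnacleSets (by omega)
    _ = (m - 2).choose (m / 2) := Nat.choose_symm_of_eq_add (by omega)
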